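/- Let X_1,…,X_m be pairwise commuting Hermitian N×N complex matrices, let P be any N×N complex matrix, let S > 0, and let F : ℝ → ℂ be integrable with Fourier transform F̂(ω) = ∫ F(t) e^{−iωt} dt vanishing for all |ω| ≥ 1. Define H = S^m ∫_{ℝ^m} (∏_{j=1}^m F(S a_j)) · exp(i Σ_j a_j X_j) P exp(−i Σ_j a_j X_j) da. Suppose v_1 and v_2 are joint eigenvectors, X_j v_l = x_j^{(l)} v_l for all j and l ∈ {1,2}, and that |x_j^{(1)} − x_j^{(2)}| ≥ S for some j. Then ⟨v_1, H v_2⟩ = 0. -/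

import Mathlib

/-!
On a joint eigenvector the unitaries `exp (± i ∑ⱼ aⱼ Xⱼ)` act by the phases `e^{± i ⟨a, x⟩}`, so
the integrand of `⟨v₁, H v₂⟩` is `⟨v₁, P v₂⟩ ∏ⱼ F (S aⱼ) e^{i (x₁ⱼ - x₂ⱼ) aⱼ}` and the integral
factorises into one-dimensional ones. After the substitution `t = S aⱼ`, the `j`-th factor is the
Fourier transform of `F` at `-(x₁ⱼ - x₂ⱼ) / S`, which vanishes for the separating index `j`.
(If the integrand is not Bochner integrable, `H = 0` anyway.)
-/

open MeasureTheory Complex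

section Exponential

variable {𝕂 E : Type*} [RCLike 𝕂] [NormedAddCommGroup E] [NormedSpace 𝕂 E] [CompleteSpace E]

theorem ContinuousLinearMap.exp_apply_of_apply_eq_smul {T : E →L[𝕂] E} {c : 𝕂} {v : E}
    (hv : T v = c • v) : NormedSpace.exp T v = NormedSpace.exp c • v := by
  have hpow : ∀ n : ℕ, (T ^ n) v = c ^ n • v := by
    intro n
    induction n with
    | zero => simp
    | succ n ih =>
      rw [pow_succ, mul_apply_eq_comp, hv, map_smul, ih, smul_smul, ← pow_succ']
  have hT := (NormedSpace.exp_series_hasSum_exp' (𝕂 := 𝕂) T).mapL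
    (ContinuousLinearMap.apply 𝕂 E v)
  refine hT.unique ?_
  simpa [hpow, smul_smul] using (NormedSpace.exp_series_hasSum_exp' (𝕂 := 𝕂) c).smul_const v

end Exponential

theorem ContinuousLinearMap.sum_smul_apply_of_apply_eq_smul {E ι : Type*}
    [NormedAddCommGroup E] [NormedSpace ℂ E] (s : Finset ι) {X : ι → E →L[ℂ] E} {v : E}
    {x : ι → ℝ} (hv : ∀ j, X j v = (x j : ℂ) • v) (a : ι → ℝ) :
    (∑ j ∈ s, (a j : ℂ) • X j) v = ((∑ j ∈ s, a j * x j : ℝ) : ℂ) • v := by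
  simp only [sum_apply, smul_apply, hv, smul_smul]
  push_cast
  exact (Finset.sum_smul ..).symm

theorem integral_comp_mul_left_mul_cexp_eq_zero {F : ℝ → ℂ}
    (hF : ∀ ω : ℝ, 1 ≤ |ω| → ∫ t : ℝ, F t * cexp (-(I * ω * t)) = 0)
    {S d : ℝ} (hS : 0 < S) (hd : S ≤ |d|) :
    ∫ t : ℝ, F (S * t) * cexp (I * d * t) = 0 := by
  have hrescale : ∀ t : ℝ, cexp (I * d * t) = cexp (-(I * ↑(-(d / S)) * ↑(S * t))) := by
    intro t
    have : (S : ℂ) ≠ 0 := ofReal_ne_zero.mpr hS.ne'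
    congr 1
    push_cast
    field_simp
  simp_rw [hrescale]
  rw [Measure.integral_comp_mul_left (fun u : ℝ => F u * cexp (-(I * ↑(-(d / S)) * u))) S,
    hF _ ?_, smul_zero]
  rwa [abs_neg, abs_div, abs_of_pos hS, one_le_div hS]

section Hilbert

variable {E : Type*} [NormedAddCommGroup E] [InnerProductSpace ℂ E] [CompleteSpace E]

theorem inner_exp_conj_apply_of_apply_eq_smul {A : E →L[ℂ] E} (hA : IsSelfAdjoint A)
    (P : E →L[ℂ] E) {v w : E} {μ ν : ℝ} (hv : A v = (μ : ℂ) • v) (hw : A w = (ν : ℂ) • w) :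
    inner ℂ v ((NormedSpace.exp (I • A) * P * NormedSpace.exp (-(I • A))) w) =
      cexp (I * (μ - ν)) * inner ℂ v (P w) := by
  have hexp : ∀ {u : E} {l : ℝ}, A u = (l : ℂ) • u →
      NormedSpace.exp (-(I • A)) u = cexp (-(I * l)) • u := by
    intro u l hu
    rw [exp_eq_exp_ℂ]
    refine ContinuousLinearMap.exp_apply_of_apply_eq_smul ?_
    rw [neg_apply, smul_apply, hu, smul_smul, neg_smul]
  have hstar : star (I • A) = -(I • A) := by
    rw [star_smul, hA.star_eq, Complex.star_def, conj_I, neg_smul]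
  calc inner ℂ v ((NormedSpace.exp (I • A) * P * NormedSpace.exp (-(I • A))) w)
      = inner ℂ (NormedSpace.exp (-(I • A)) v) (P (NormedSpace.exp (-(I • A)) w)) := by
        rw [mul_apply_eq_comp, mul_apply_eq_comp,
          ← ContinuousLinearMap.adjoint_inner_left, ← ContinuousLinearMap.star_eq_adjoint,
          NormedSpace.star_exp, hstar]
    _ = cexp (I * (μ - ν)) * inner ℂ v (P w) := by
        rw [hexp hv, hexp hw, map_smul, inner_smul_left, inner_smul_right, ← exp_conj,
          ← mul_assoc, ← Complex.exp_add]
        congr 2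
        simp only [map_neg, map_mul, conj_I, conj_ofReal]
        ring

theorem inner_exp_sum_conj_apply_of_apply_eq_smul {ι : Type*} [Fintype ι] {X : ι → E →L[ℂ] E}
    (hX : ∀ j, IsSelfAdjoint (X j)) (P : E →L[ℂ] E) {v w : E} {x y : ι → ℝ}
    (hv : ∀ j, X j v = (x j : ℂ) • v) (hw : ∀ j, X j w = (y j : ℂ) • w) (a : ι → ℝ) :
    inner ℂ v ((NormedSpace.exp (I • ∑ j, (a j : ℂ) • X j) * P *
        NormedSpace.exp (-(I • ∑ j, (a j : ℂ) • X j))) w) =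
      (∏ j, cexp (I * ↑(x j - y j) * a j)) * inner ℂ v (P w) := by
  have hsa : IsSelfAdjoint (∑ j, (a j : ℂ) • X j) :=
    isSelfAdjoint_sum (R := E →L[ℂ] E) _ fun j _ => .smul (conj_ofReal (a j)) (hX j)
  rw [inner_exp_conj_apply_of_apply_eq_smul hsa P
    (ContinuousLinearMap.sum_smul_apply_of_apply_eq_smul _ hv a)
    (ContinuousLinearMap.sum_smul_apply_of_apply_eq_smul _ hw a), ← Complex.exp_sum]
  congr 2
  push_cast
  rw [← Finset.sum_sub_distrib, Finset.mul_sum]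
  exact Finset.sum_congr rfl fun j _ => by ring

theorem inner_integral_apply {α : Type*} [MeasurableSpace α] {μ : Measure α}
    {f : α → E →L[ℂ] E} (hf : Integrable f μ) (v w : E) :
    inner ℂ v ((∫ a, f a ∂μ) w) = ∫ a, inner ℂ v (f a w) ∂μ :=
  (((innerSL ℂ v).comp (ContinuousLinearMap.apply ℂ E w)).integral_comp_comm hf).symm

end Hilbert

theorem stmt8 {N m : ℕ}
    (X : Fin m → (EuclideanSpace ℂ (Fin N) →L[ℂ] EuclideanSpace ℂ (Fin N)))
    (hXsa : ∀ j, IsSelfAdjoint (X j))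
    (P : EuclideanSpace ℂ (Fin N) →L[ℂ] EuclideanSpace ℂ (Fin N))
    (S : ℝ) (hS : 0 < S)
    (F : ℝ → ℂ)
    (hFhat : ∀ ω : ℝ, 1 ≤ |ω| → ∫ t : ℝ, F t * Complex.exp (-(Complex.I * ω * t)) = 0)
    (v1 v2 : EuclideanSpace ℂ (Fin N)) (x1 x2 : Fin m → ℝ)
    (hv1 : ∀ j, X j v1 = (x1 j : ℂ) • v1) (hv2 : ∀ j, X j v2 = (x2 j : ℂ) • v2)
    (hsep : ∃ j, S ≤ |x1 j - x2 j|) :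
    (inner ℂ v1
      ((S ^ m • ∫ a : Fin m → ℝ, (∏ j, F (S * a j)) •
        (NormedSpace.exp (Complex.I • ∑ j, (a j : ℂ) • X j) * P *
          NormedSpace.exp (-(Complex.I • ∑ j, (a j : ℂ) • X j)))) v2) : ℂ) = 0 := by
  set f : (Fin m → ℝ) → EuclideanSpace ℂ (Fin N) →L[ℂ] EuclideanSpace ℂ (Fin N) :=
    fun a => (∏ j, F (S * a j)) •
      (NormedSpace.exp (I • ∑ j, (a j : ℂ) • X j) * P *
        NormedSpace.exp (-(I • ∑ j, (a j : ℂ) • X j)))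
  suffices h : inner ℂ v1 ((∫ a, f a) v2) = 0 by
    rw [smul_apply, ← Complex.coe_smul, inner_smul_right, h, mul_zero]
  by_cases hf : Integrable f
  swap
  · simp [integral_undef hf]
  have hpointwise : ∀ a, inner ℂ v1 (f a v2) =
      (∏ j, F (S * a j) * cexp (I * ↑(x1 j - x2 j) * a j)) * inner ℂ v1 (P v2) := by
    intro a
    rw [smul_apply, inner_smul_right, inner_exp_sum_conj_apply_of_apply_eq_smul hXsa P hv1 hv2 a,
      Finset.prod_mul_distrib, mul_assoc]
  obtain ⟨j, hj⟩ := hsep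
  simp_rw [inner_integral_apply hf, hpointwise]
  rw [integral_mul_const, integral_fintype_prod_volume_eq_prod
      (fun j t => F (S * t) * cexp (I * ↑(x1 j - x2 j) * t)),
    Finset.prod_eq_zero (Finset.mem_univ j) (integral_comp_mul_left_mul_cexp_eq_zero hFhat hS hj),
    zero_mul]
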